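/- arXiv:1111.6514 — 3 statements merged into one kernel-verified Lean document; each statement's English description precedes it below -/
import Mathlib

section
/- For any real numbers a with |a| < 1 and any even integer n ≥ 2, the principal value integral over [0, 2π] of sin^{n-2}(φ)/(cos φ − a)^n dφ is zero. -/
/-!
For `Im w ≠ 0` put `J_k(w) = ∫₀^{2π} sin^m φ / (cos φ - w)^k dφ`. Differentiating under the
integral sign gives `J_{m+1}' = (m + 1) J_{m+2}`, and integrating the derivative of
`(sin φ / (cos φ - w))^{m+1}` over a period gives `(1 - w²) J_{m+2} = w J_{m+1}`. Hence
`J_{m+1}(w)² (1 - w²)^{m+1}` has zero derivative, so it is constant on the upper half-plane,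
equal to its value `-(Im J_{m+1}(i))² 2^{m+1}` at `i`: the shift `φ ↦ φ + π` together with complex
conjugation shows that `J_{m+1}(i)` is purely imaginary. Therefore
`J_{m+2}(a + iε)² = c (a + iε)² / (1 - (a + iε)²)^{m+3}` with a real `c ≤ 0`, which tends to a
nonpositive real number as `ε → 0⁺`; a complex number whose square is close to the negative real
axis has small real part.
-/

open Real Filter Complex

open MeasureTheory Topology

noncomputable def sinCosIntegral (m k : ℕ) (w : ℂ) : ℂ :=
  ∫ φ in (0 : ℝ)..(2 * π), (Real.sin φ : ℂ) ^ m / ((Real.cos φ : ℂ) - w) ^ k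

lemma ofReal_sub_ne_zero {w : ℂ} (hw : w.im ≠ 0) (t : ℝ) : (t : ℂ) - w ≠ 0 :=
  sub_ne_zero.2 fun h => hw (by simp [← h])

lemma abs_im_le_norm_ofReal_sub (t : ℝ) (w : ℂ) : |w.im| ≤ ‖(t : ℂ) - w‖ := by
  simpa using abs_im_le_norm ((t : ℂ) - w)

lemma one_sub_sq_ne_zero {w : ℂ} (hw : w.im ≠ 0) : 1 - w ^ 2 ≠ 0 := by
  intro h
  rcases mul_self_eq_one_iff.mp (by linear_combination -h : w * w = 1) with rfl | rfl <;> simp at hw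

lemma continuous_sin_pow_div_cos_sub_pow (m k : ℕ) {w : ℂ} (hw : w.im ≠ 0) :
    Continuous fun φ : ℝ => (Real.sin φ : ℂ) ^ m / ((Real.cos φ : ℂ) - w) ^ k :=
  Continuous.div (by fun_prop) (by fun_prop) fun φ => pow_ne_zero _ (ofReal_sub_ne_zero hw _)

lemma norm_sin_pow_div_cos_sub_pow_le (m k : ℕ) (φ : ℝ) {w : ℂ} (hw : w.im ≠ 0) :
    ‖(Real.sin φ : ℂ) ^ m / ((Real.cos φ : ℂ) - w) ^ k‖ ≤ 1 / |w.im| ^ k := by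
  rw [norm_div, norm_pow, norm_pow]
  refine div_le_div₀ zero_le_one (pow_le_one₀ (norm_nonneg _) ?_) (by positivity)
    (pow_le_pow_left₀ (abs_nonneg _) (abs_im_le_norm_ofReal_sub _ _) _)
  rw [Complex.norm_real, Real.norm_eq_abs]
  exact abs_sin_le_one φ

lemma hasDerivAt_div_sub_pow (s c : ℂ) (k : ℕ) {x : ℂ} (hx : c - x ≠ 0) :
    HasDerivAt (fun x => s / (c - x) ^ k) (k * (s / (c - x) ^ (k + 1))) x := by
  have hden : HasDerivAt (fun x => (c - x) ^ k) (k * (c - x) ^ (k - 1) * -1) x := by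
    simpa using ((hasDerivAt_id x).const_sub c).fun_pow k
  refine ((hasDerivAt_const x s).fun_div hden (pow_ne_zero k hx)).congr_deriv ?_
  rcases k with _ | k
  · simp
  · rw [Nat.add_sub_cancel]
    field_simp
    ring

lemma hasDerivAt_sinCosIntegral (m k : ℕ) {w : ℂ} (hw : w.im ≠ 0) :
    HasDerivAt (sinCosIntegral m k) (k * sinCosIntegral m (k + 1) w) w := by
  set δ := |w.im| / 2 with hδ_def
  have hδ : 0 < δ := by positivity
  have hball : ∀ x ∈ Metric.ball w δ, δ ≤ |x.im| := fun x hx => by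
    have h₁ := abs_sub_abs_le_abs_sub w.im x.im
    have h₂ : |(w - x).im| < δ := (abs_im_le_norm _).trans_lt (mem_ball_iff_norm'.mp hx)
    rw [sub_im] at h₂
    linarith [hδ_def]
  have him : ∀ x ∈ Metric.ball w δ, x.im ≠ 0 := fun x hx =>
    abs_pos.mp (hδ.trans_le (hball x hx))
  have key := intervalIntegral.hasDerivAt_integral_of_dominated_loc_of_deriv_le
    (𝕜 := ℂ) (μ := volume) (a := 0) (b := 2 * π)
    (F := fun x φ => (Real.sin φ : ℂ) ^ m / ((Real.cos φ : ℂ) - x) ^ k)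
    (F' := fun x φ => k * ((Real.sin φ : ℂ) ^ m / ((Real.cos φ : ℂ) - x) ^ (k + 1)))
    (bound := fun _ => k * (1 / δ ^ (k + 1))) (Metric.ball_mem_nhds w hδ)
    (eventually_of_mem (Metric.ball_mem_nhds w hδ) fun x hx =>
      (continuous_sin_pow_div_cos_sub_pow m k (him x hx)).aestronglyMeasurable)
    ((continuous_sin_pow_div_cos_sub_pow m k hw).intervalIntegrable _ _)
    ((continuous_sin_pow_div_cos_sub_pow m (k + 1) hw).const_mul _).aestronglyMeasurable
    (ae_of_all _ fun φ _ x hx => ?_) intervalIntegrable_const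
    (ae_of_all _ fun φ _ x hx =>
      hasDerivAt_div_sub_pow _ _ k (ofReal_sub_ne_zero (him x hx) (Real.cos φ)))
  · rw [intervalIntegral.integral_const_mul] at key
    exact key.2
  · rw [norm_mul, Complex.norm_natCast]
    gcongr
    exact (norm_sin_pow_div_cos_sub_pow_le m (k + 1) φ (him x hx)).trans
      (by gcongr; exact hball x hx)

lemma hasDerivAt_sin_div_cos_sub_pow (m : ℕ) {w : ℂ} (hw : w.im ≠ 0) (φ : ℝ) :
    HasDerivAt (fun φ : ℝ => ((Real.sin φ : ℂ) / ((Real.cos φ : ℂ) - w)) ^ (m + 1))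
      ((m + 1) * ((1 - w ^ 2) * ((Real.sin φ : ℂ) ^ m / ((Real.cos φ : ℂ) - w) ^ (m + 2))
        - w * ((Real.sin φ : ℂ) ^ m / ((Real.cos φ : ℂ) - w) ^ (m + 1)))) φ := by
  have hs : HasDerivAt (fun φ : ℝ => (Real.sin φ : ℂ)) (Real.cos φ) φ :=
    (Real.hasDerivAt_sin φ).ofReal_comp
  have hc : HasDerivAt (fun φ : ℝ => (Real.cos φ : ℂ) - w) (-Real.sin φ) φ := by
    simpa using (Real.hasDerivAt_cos φ).ofReal_comp.sub_const w
  have hd := ofReal_sub_ne_zero hw (Real.cos φ)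
  have pythagoras : (Real.sin φ : ℂ) ^ 2 + (Real.cos φ : ℂ) ^ 2 = 1 := by
    exact_mod_cast Real.sin_sq_add_cos_sq φ
  refine ((hs.fun_div hc hd).fun_pow (m + 1)).congr_deriv ?_
  have hnum :
      (Real.cos φ : ℂ) * ((Real.cos φ : ℂ) - w) - (Real.sin φ : ℂ) * -(Real.sin φ : ℂ)
        = 1 - w * Real.cos φ := by
    linear_combination pythagoras
  rw [Nat.add_sub_cancel, hnum, div_pow, Nat.cast_succ]
  field_simp
  ring

lemma one_sub_sq_mul_sinCosIntegral (m : ℕ) {w : ℂ} (hw : w.im ≠ 0) :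
    (1 - w ^ 2) * sinCosIntegral m (m + 2) w = w * sinCosIntegral m (m + 1) w := by
  have hint := fun k : ℕ =>
    (continuous_sin_pow_div_cos_sub_pow m k hw).intervalIntegrable (μ := volume) 0 (2 * π)
  have hFTC := intervalIntegral.integral_eq_sub_of_hasDerivAt
    (fun φ _ => hasDerivAt_sin_div_cos_sub_pow m hw φ)
    ((((hint _).const_mul _).sub ((hint _).const_mul _)).const_mul _)
  simp only [Real.sin_zero, Real.sin_two_pi, ofReal_zero, zero_div, zero_pow (Nat.succ_ne_zero m),
    sub_zero] at hFTC
  rw [intervalIntegral.integral_const_mul,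
    intervalIntegral.integral_sub ((hint _).const_mul _) ((hint _).const_mul _),
    intervalIntegral.integral_const_mul, intervalIntegral.integral_const_mul] at hFTC
  have hm : (m : ℂ) + 1 ≠ 0 := by exact_mod_cast Nat.succ_ne_zero m
  exact sub_eq_zero.mp ((mul_eq_zero.mp hFTC).resolve_left hm)

lemma sinCosIntegral_sq_mul_one_sub_sq_pow_eq (m : ℕ) {w w' : ℂ} (hw : 0 < w.im)
    (hw' : 0 < w'.im) :
    sinCosIntegral m (m + 1) w ^ 2 * (1 - w ^ 2) ^ (m + 1)
      = sinCosIntegral m (m + 1) w' ^ 2 * (1 - w' ^ 2) ^ (m + 1) := by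
  set H : ℂ → ℂ := fun z => sinCosIntegral m (m + 1) z ^ 2 * (1 - z ^ 2) ^ (m + 1)
  have hH : ∀ z : ℂ, 0 < z.im → HasDerivAt H 0 z := fun z hz => by
    have hJ := hasDerivAt_sinCosIntegral m (m + 1) hz.ne'
    have hsq : HasDerivAt (fun z : ℂ => 1 - z ^ 2) (-(2 * z)) z := by
      simpa using (hasDerivAt_pow 2 z).const_sub 1
    refine ((hJ.fun_pow 2).mul (hsq.fun_pow (m + 1))).congr_deriv ?_
    simp only [Nat.add_sub_cancel, Nat.cast_ofNat, Nat.cast_succ]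
    linear_combination (2 * ((m : ℂ) + 1) * sinCosIntegral m (m + 1) z * (1 - z ^ 2) ^ m)
      * one_sub_sq_mul_sinCosIntegral m hz.ne'
  have hU : IsOpen {z : ℂ | 0 < z.im} := isOpen_lt continuous_const continuous_im
  exact hU.is_const_of_deriv_eq_zero (convex_halfSpace_im_gt 0).isPreconnected
    (fun z hz => (hH z hz).differentiableAt.differentiableWithinAt)
    (fun z hz => (hH z hz).deriv) hw hw'

lemma re_sinCosIntegral_I {m k : ℕ} (hmk : Odd (m + k)) : (sinCosIntegral m k I).re = 0 := by
  set f : ℝ → ℂ := fun φ => (Real.sin φ : ℂ) ^ m / ((Real.cos φ : ℂ) - I) ^ k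
  have hf : Function.Periodic f (2 * π) := fun φ => by
    simp only [f, Real.sin_add_two_pi, Real.cos_add_two_pi]
  -- both sides are `± sin φ ^ m / (cos φ + I) ^ k`, the sign of `f (φ + π)` being `(-1) ^ (m + k)`
  have hconj : ∀ φ, (starRingEnd ℂ) (f φ) = -f (φ + π) := fun φ => by
    have hne : (Real.cos φ : ℂ) + I ≠ 0 := by
      simpa using ofReal_sub_ne_zero (w := -I) (by simp) (Real.cos φ)
    have hsign : (-1 : ℂ) ^ m * (-1) ^ k = -1 := by rw [← pow_add, hmk.neg_one_pow]
    have hsq : ((-1 : ℂ) ^ k) ^ 2 = 1 := by rw [← pow_mul, mul_comm, pow_mul]; simp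
    simp only [f, map_div₀, map_pow, map_sub, conj_ofReal, conj_I, sub_neg_eq_add,
      Real.sin_add_pi, Real.cos_add_pi, ofReal_neg,
      show -(Real.cos φ : ℂ) - I = -((Real.cos φ : ℂ) + I) by ring, neg_pow (Real.sin φ : ℂ),
      neg_pow ((Real.cos φ : ℂ) + I)]
    field_simp
    linear_combination (Real.sin φ : ℂ) ^ m * ((-1) ^ k * hsign - (-1) ^ m * hsq)
  have h : (starRingEnd ℂ) (sinCosIntegral m k I) = -sinCosIntegral m k I := by
    change (starRingEnd ℂ) (∫ φ in (0 : ℝ)..(2 * π), f φ) = -∫ φ in (0 : ℝ)..(2 * π), f φ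
    rw [← intervalIntegral.intervalIntegral_conj]
    simp_rw [hconj]
    simp only [intervalIntegral.integral_neg, intervalIntegral.integral_comp_add_right f π]
    rw [zero_add, show 2 * π + π = π + 2 * π by ring, hf.intervalIntegral_add_eq π 0, zero_add]
  simpa [Complex.ext_iff, eq_neg_iff_add_eq_zero] using h

lemma exists_sinCosIntegral_sq_eq (m : ℕ) :
    ∃ c : ℝ, c ≤ 0 ∧ ∀ w : ℂ, 0 < w.im →
      sinCosIntegral m (m + 2) w ^ 2 = c * w ^ 2 / (1 - w ^ 2) ^ (m + 3) := by
  obtain ⟨y, hy⟩ : ∃ y : ℝ, sinCosIntegral m (m + 1) I = y * I :=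
    ⟨(sinCosIntegral m (m + 1) I).im,
      Complex.ext (by simpa using re_sinCosIntegral_I ⟨m, by ring⟩) (by simp)⟩
  refine ⟨-y ^ 2 * 2 ^ (m + 1),
    mul_nonpos_of_nonpos_of_nonneg (neg_nonpos.2 (sq_nonneg _)) (by positivity), fun w hw => ?_⟩
  have hI : sinCosIntegral m (m + 1) I ^ 2 * (1 - I ^ 2) ^ (m + 1)
      = ((-y ^ 2 * 2 ^ (m + 1) : ℝ) : ℂ) := by
    rw [hy, mul_pow, I_sq]
    push_cast
    ring
  have h1 := one_sub_sq_ne_zero hw.ne'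
  rw [← hI, ← sinCosIntegral_sq_mul_one_sub_sq_pow_eq m hw (by simp),
    eq_div_iff (pow_ne_zero _ h1)]
  linear_combination (sinCosIntegral m (m + 2) w * (1 - w ^ 2) + w * sinCosIntegral m (m + 1) w)
    * (1 - w ^ 2) ^ (m + 1) * one_sub_sq_mul_sinCosIntegral m hw.ne'

lemma tendsto_re_nhds_zero_of_tendsto_sq {α : Type*} {l : Filter α} {f : α → ℂ} {c : ℝ}
    (hc : c ≤ 0) (hf : Tendsto (fun x => f x ^ 2) l (𝓝 c)) :
    Tendsto (fun x => (f x).re) l (𝓝 0) := by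
  -- `(Re z)² = (‖z²‖ + Re z²) / 2`, which tends to `(|c| + c) / 2 = 0`
  have hre_sq : ∀ z : ℂ, z.re ^ 2 = (‖z ^ 2‖ + (z ^ 2).re) / 2 := fun z => by
    rw [norm_pow, Complex.sq_norm, normSq_apply, sq z, mul_re]
    ring
  have h := ((hf.norm.add ((continuous_re.tendsto _).comp hf)).div_const 2).sqrt
  simp only [norm_real, Real.norm_eq_abs, abs_of_nonpos hc, ofReal_re, neg_add_cancel, zero_div,
    Real.sqrt_zero] at h
  refine (tendsto_zero_iff_abs_tendsto_zero _).mpr (h.congr fun x => ?_)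
  simp only [Function.comp, ← hre_sq, Real.sqrt_sq_eq_abs]

theorem stmt_0_general (a : ℝ) (ha : |a| < 1) (n : ℕ) (hn : 2 ≤ n) :
    Tendsto
      (fun ε : ℝ =>
        (∫ φ in (0 : ℝ)..(2 * π),
            ((Real.sin φ : ℂ) ^ (n - 2) / ((Real.cos φ : ℂ) - a - ε * Complex.I) ^ n)).re)
      (nhdsWithin 0 (Set.Ioi 0)) (nhds 0) := by
  obtain ⟨m, rfl⟩ : ∃ m, n = m + 2 := ⟨n - 2, by omega⟩
  obtain ⟨c, hc, hsq⟩ := exists_sinCosIntegral_sq_eq m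
  have ha2 : 0 < 1 - a ^ 2 := by nlinarith [abs_lt.mp ha]
  have ha2' : ((1 : ℂ) - a ^ 2) ^ (m + 3) ≠ 0 := by exact_mod_cast pow_ne_zero (m + 3) ha2.ne'
  have hlim : Tendsto (fun ε : ℝ => (c : ℂ) * (a + ε * I) ^ 2 / (1 - (a + ε * I) ^ 2) ^ (m + 3))
      (𝓝[>] 0) (𝓝 ((c * a ^ 2 / (1 - a ^ 2) ^ (m + 3) : ℝ) : ℂ)) := by
    have hcont : ContinuousAt
        (fun ε : ℝ => (c : ℂ) * (a + ε * I) ^ 2 / (1 - (a + ε * I) ^ 2) ^ (m + 3)) 0 := by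
      fun_prop (disch := simpa using ha2')
    simpa using hcont.tendsto.mono_left nhdsWithin_le_nhds
  have hnonpos : c * a ^ 2 / (1 - a ^ 2) ^ (m + 3) ≤ 0 :=
    div_nonpos_of_nonpos_of_nonneg (mul_nonpos_of_nonpos_of_nonneg hc (sq_nonneg a)) (by positivity)
  have hsq_lim : Tendsto (fun ε : ℝ => sinCosIntegral m (m + 2) (a + ε * I) ^ 2) (𝓝[>] 0)
      (𝓝 ((c * a ^ 2 / (1 - a ^ 2) ^ (m + 3) : ℝ) : ℂ)) :=
    hlim.congr' (eventually_nhdsWithin_of_forall fun ε hε => (hsq _ (by simpa using hε)).symm)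
  refine (tendsto_re_nhds_zero_of_tendsto_sq hnonpos hsq_lim).congr fun ε => ?_
  simp [sinCosIntegral, sub_sub]

theorem stmt_0 (a : ℝ) (ha : |a| < 1) (n : ℕ) (hn : 2 ≤ n) (hne : Even n) :
    Tendsto
      (fun ε : ℝ =>
        (∫ φ in (0 : ℝ)..(2 * π),
            ((Real.sin φ : ℂ) ^ (n - 2) / ((Real.cos φ : ℂ) - a - ε * Complex.I) ^ n)).re)
      (nhdsWithin 0 (Set.Ioi 0)) (nhds 0) :=
  stmt_0_general a ha n hn
end

section
/- Let t and s be real trigonometric polynomials with deg s < deg t, all zeros of t (in ℂ/2πℤ) real and simple, and set r = s/t. Then the principal value integral (P)∫_0^{2π} r^n(φ) dφ = 0 for every natural number n ≥ 1. -/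
/-!
Since `T` has only real zeros, `f = (S / T) ^ n` is holomorphic on the upper half-plane and
`2π`-periodic, so by Cauchy's theorem on rectangles the integral of `f` along `Im ζ = η` over one
period does not depend on `η > 0`: the vertical sides cancel by periodicity. As `Im ζ → ∞` the
term `e^{-ikζ}` of `T` dominates, while `‖S ζ‖ = O(e^{l Im ζ})` with `l < k`; hence `f → 0`
uniformly and the integral vanishes for every `η > 0`.
-/

open Real Filter

open Complex in
lemma Complex.norm_cos_le_exp_abs_im (z : ℂ) : ‖cos z‖ ≤ Real.exp |z.im| := by
  have h₁ : ‖exp (z * I)‖ ≤ Real.exp |z.im| := by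
    simpa [norm_exp] using neg_le_abs z.im
  have h₂ : ‖exp (-z * I)‖ ≤ Real.exp |z.im| := by
    simpa [norm_exp] using le_abs_self z.im
  calc ‖cos z‖ = ‖exp (z * I) + exp (-z * I)‖ / 2 := by simp [cos]
    _ ≤ (‖exp (z * I)‖ + ‖exp (-z * I)‖) / 2 := by gcongr; exact norm_add_le _ _
    _ ≤ Real.exp |z.im| := by linarith

open Complex in
lemma Complex.norm_sin_le_exp_abs_im (z : ℂ) : ‖sin z‖ ≤ Real.exp |z.im| := by
  have h₁ : ‖exp (z * I)‖ ≤ Real.exp |z.im| := by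
    simpa [norm_exp] using neg_le_abs z.im
  have h₂ : ‖exp (-z * I)‖ ≤ Real.exp |z.im| := by
    simpa [norm_exp] using le_abs_self z.im
  calc ‖sin z‖ = ‖exp (-z * I) - exp (z * I)‖ / 2 := by simp [sin]
    _ ≤ (‖exp (-z * I)‖ + ‖exp (z * I)‖) / 2 := by gcongr; exact norm_sub_le _ _
    _ ≤ Real.exp |z.im| := by linarith

lemma Complex.norm_ofReal_sub_mul_I (x y : ℝ) : ‖(x : ℂ) - y * Complex.I‖ = ‖(x : ℂ) + y * Complex.I‖ := by
  rw [← Complex.norm_conj]; simp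

noncomputable def trigPoly (a b : ℕ → ℝ) (m : ℕ) (z : ℂ) : ℂ :=
  ∑ j ∈ Finset.range (m + 1), ((a j : ℂ) * Complex.cos (j * z) + (b j : ℂ) * Complex.sin (j * z))

namespace trigPoly

variable (a b : ℕ → ℝ) (m : ℕ)

lemma differentiable : Differentiable ℂ (trigPoly a b m) := by
  unfold trigPoly
  fun_prop

lemma periodic : Function.Periodic (trigPoly a b m) (2 * π) := by
  intro z
  refine Finset.sum_congr rfl fun j _ => ?_
  rw [show (j : ℂ) * (z + 2 * π) = j * z + (j : ℤ) * (2 * π) by push_cast; ring,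
    Complex.cos_add_int_mul_two_pi, Complex.sin_add_int_mul_two_pi]

lemma norm_le (z : ℂ) :
    ‖trigPoly a b m z‖ ≤ (∑ j ∈ Finset.range (m + 1), (|a j| + |b j|)) * Real.exp (m * |z.im|) := by
  rw [trigPoly, Finset.sum_mul]
  refine (norm_sum_le _ _).trans (Finset.sum_le_sum fun j hj => ?_)
  have hexp : Real.exp |((j : ℂ) * z).im| ≤ Real.exp (m * |z.im|) := by
    have hjm : (j : ℝ) ≤ m := by exact_mod_cast Finset.mem_range_succ_iff.mp hj
    simpa [abs_mul] using mul_le_mul_of_nonneg_right hjm (abs_nonneg z.im)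
  calc ‖(a j : ℂ) * Complex.cos (j * z) + (b j : ℂ) * Complex.sin (j * z)‖
        ≤ |a j| * ‖Complex.cos (j * z)‖ + |b j| * ‖Complex.sin (j * z)‖ := by
        simpa using norm_add_le ((a j : ℂ) * Complex.cos (j * z)) ((b j : ℂ) * Complex.sin (j * z))
    _ ≤ |a j| * Real.exp (m * |z.im|) + |b j| * Real.exp (m * |z.im|) := by
        gcongr
        · exact (Complex.norm_cos_le_exp_abs_im _).trans hexp
        · exact (Complex.norm_sin_le_exp_abs_im _).trans hexp
    _ = _ := by ring

lemma succ_eq (z : ℂ) :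
    trigPoly a b (m + 1) z =
      (a (m + 1) + b (m + 1) * Complex.I) / 2 * Complex.exp (-((m + 1 : ℕ) * z) * Complex.I) +
      ((a (m + 1) - b (m + 1) * Complex.I) / 2 * Complex.exp ((m + 1 : ℕ) * z * Complex.I) +
        trigPoly a b m z) := by
  rw [trigPoly, Finset.sum_range_succ, ← trigPoly, Complex.cos, Complex.sin]
  ring

lemma norm_succ_ge {z : ℂ} (hz : 0 ≤ z.im) :
    (‖((a (m + 1) : ℂ) + b (m + 1) * Complex.I) / 2‖ * Real.exp z.im
        - ‖((a (m + 1) : ℂ) + b (m + 1) * Complex.I) / 2‖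
        - ∑ j ∈ Finset.range (m + 1), (|a j| + |b j|)) * Real.exp (m * z.im)
      ≤ ‖trigPoly a b (m + 1) z‖ := by
  set A := ‖((a (m + 1) : ℂ) + b (m + 1) * Complex.I) / 2‖
  set C := ∑ j ∈ Finset.range (m + 1), (|a j| + |b j|)
  set L := ((a (m + 1) : ℂ) + b (m + 1) * Complex.I) / 2 * Complex.exp (-((m + 1 : ℕ) * z) * Complex.I)
  set R := ((a (m + 1) : ℂ) - b (m + 1) * Complex.I) / 2 * Complex.exp ((m + 1 : ℕ) * z * Complex.I) +
        trigPoly a b m z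
  have hL : ‖L‖ = A * Real.exp z.im * Real.exp (m * z.im) := by
    have hre : (-((m + 1 : ℕ) * z) * Complex.I).re = z.im + m * z.im := by simp; ring
    rw [norm_mul, Complex.norm_exp, hre, Real.exp_add, mul_assoc]
  have hR : ‖R‖ ≤ (A + C) * Real.exp (m * z.im) := by
    have hexp : Real.exp (-((m + 1) * z.im)) ≤ Real.exp (m * z.im) := by
      gcongr; nlinarith
    calc ‖R‖ ≤ A * Real.exp (-((m + 1) * z.im)) + C * Real.exp (m * |z.im|) := by
          refine (norm_add_le _ _).trans (add_le_add (le_of_eq ?_) (norm_le a b m z))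
          simp [A, Complex.norm_ofReal_sub_mul_I, Complex.norm_exp]
      _ ≤ (A + C) * Real.exp (m * z.im) := by
          rw [abs_of_nonneg hz]; nlinarith [norm_nonneg (((a (m + 1) : ℂ) + b (m + 1) * Complex.I) / 2)]
  have htri : ‖L‖ - ‖R‖ ≤ ‖L + R‖ := by simpa using norm_sub_norm_le L (-R)
  rw [succ_eq]
  nlinarith

lemma tendsto_div_comap_im_atTop (c d : ℕ → ℝ) {l : ℕ} (hlm : l ≤ m)
    (hlead : (a (m + 1), b (m + 1)) ≠ (0, 0)) :
    Tendsto (fun z => trigPoly c d l z / trigPoly a b (m + 1) z)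
      (comap Complex.im atTop) (nhds 0) := by
  set A := ‖((a (m + 1) : ℂ) + b (m + 1) * Complex.I) / 2‖
  set C := ∑ j ∈ Finset.range (m + 1), (|a j| + |b j|)
  set B := ∑ j ∈ Finset.range (l + 1), (|c j| + |d j|)
  have hA : 0 < A := by
    refine norm_pos_iff.mpr (div_ne_zero (fun h => hlead ?_) two_ne_zero)
    simpa using Complex.ext_iff.mp h
  have hgrowth : Tendsto (fun y => A * Real.exp y - A - C) atTop atTop :=
    tendsto_atTop_add_const_right _ _ (tendsto_atTop_add_const_right _ _
      (Real.tendsto_exp_atTop.const_mul_atTop hA))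
  have hbound : ∀ᶠ z in comap Complex.im atTop,
      ‖trigPoly c d l z / trigPoly a b (m + 1) z‖ ≤ B / (A * Real.exp z.im - A - C) := by
    filter_upwards [tendsto_comap.eventually (eventually_ge_atTop 0),
      (hgrowth.comp tendsto_comap).eventually_gt_atTop 0] with z hz hpos
    have hexp : Real.exp (l * z.im) ≤ Real.exp (m * z.im) := by gcongr
    calc ‖trigPoly c d l z / trigPoly a b (m + 1) z‖
        ≤ B * Real.exp (m * z.im) / ((A * Real.exp z.im - A - C) * Real.exp (m * z.im)) := by
          rw [norm_div]
          gcongr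
          · exact (norm_le c d l z).trans (by rw [abs_of_nonneg hz]; gcongr)
          · exact norm_succ_ge a b m hz
      _ = B / (A * Real.exp z.im - A - C) := mul_div_mul_right _ _ (Real.exp_pos _).ne'
  exact squeeze_zero_norm' hbound (tendsto_const_nhds.div_atTop (hgrowth.comp tendsto_comap))

end trigPoly

section HorizontalIntegrals

open Complex

variable {E : Type*} [NormedAddCommGroup E] [NormedSpace ℂ E] {f : ℂ → E}

lemma integral_add_mul_I_eq_of_periodic {p η₁ η₂ : ℝ} (a : ℝ)
    (hf : DifferentiableOn ℂ f (im ⁻¹' Set.uIcc η₁ η₂)) (hper : Function.Periodic f p) :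
    ∫ φ : ℝ in a..a + p, f (φ + η₁ * I) = ∫ φ : ℝ in a..a + p, f (φ + η₂ * I) := by
  have H := integral_boundary_rect_eq_zero_of_differentiableOn f (a + η₁ * I) (a + p + η₂ * I)
    (hf.mono fun z hz => by simpa using hz.2)
  have hside : ∀ y : ℝ, f ((a + p : ℝ) + y * I) = f (a + y * I) := fun y => by
    simpa [add_right_comm] using hper (a + y * I)
  simp only [add_re, add_im, ofReal_re, ofReal_im, mul_re, mul_im, I_re, I_im,
    mul_zero, mul_one, zero_add, add_zero, ← ofReal_add, hside, sub_self] at H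
  exact sub_eq_zero.mp (by simpa using H)

lemma tendsto_integral_add_mul_I_atTop (a b : ℝ) (hf : Tendsto f (comap im atTop) (nhds 0)) :
    Tendsto (fun η : ℝ => ∫ φ : ℝ in a..b, f (φ + η * I)) atTop (nhds 0) := by
  rw [Metric.tendsto_nhds]
  intro ε hε
  set δ := ε / (|b - a| + 1)
  have hδ : 0 < δ := by positivity
  filter_upwards [eventually_comap.mp (hf.eventually (Metric.closedBall_mem_nhds 0 hδ))] with η hη
  have hint : ‖∫ φ : ℝ in a..b, f (φ + η * I)‖ ≤ δ * |b - a| :=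
    intervalIntegral.norm_integral_le_of_norm_le_const fun φ _ => by simpa using hη _ (by simp)
  have hε' : δ * (|b - a| + 1) = ε := div_mul_cancel₀ _ (by positivity)
  rw [dist_zero_right]
  nlinarith

theorem integral_add_mul_I_eq_zero_of_periodic {p η : ℝ} (a : ℝ)
    (hf : DifferentiableOn ℂ f {z | 0 < z.im}) (hper : Function.Periodic f p)
    (hdecay : Tendsto f (comap im atTop) (nhds 0)) (hη : 0 < η) :
    ∫ φ : ℝ in a..a + p, f (φ + η * I) = 0 := by
  refine tendsto_nhds_unique (tendsto_const_nhds.congr' ?_)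
    (tendsto_integral_add_mul_I_atTop a (a + p) hdecay)
  filter_upwards [eventually_ge_atTop η] with η' hη'
  refine integral_add_mul_I_eq_of_periodic a (hf.mono fun z hz => ?_) hper
  rw [Set.mem_preimage, Set.uIcc_of_le hη'] at hz
  exact hη.trans_le hz.1

end HorizontalIntegrals

theorem stmt_4_general (k l : ℕ) (hlk : l < k) (a b c d : ℕ → ℝ)
    (hlead : (a k, b k) ≠ (0, 0))
    (T S : ℂ → ℂ)
    (hT : ∀ ζ : ℂ, T ζ = ∑ j ∈ Finset.range (k + 1),
        ((a j : ℂ) * Complex.cos (j * ζ) + (b j : ℂ) * Complex.sin (j * ζ)))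
    (hS : ∀ ζ : ℂ, S ζ = ∑ j ∈ Finset.range (l + 1),
        ((c j : ℂ) * Complex.cos (j * ζ) + (d j : ℂ) * Complex.sin (j * ζ)))
    (hreal : ∀ ζ : ℂ, T ζ = 0 → ζ.im = 0)
    (n : ℕ) (hn : 1 ≤ n) :
    Tendsto
      (fun η : ℝ =>
        (∫ φ in (0 : ℝ)..(2 * π),
            (S ((φ : ℂ) + η * Complex.I) / T ((φ : ℂ) + η * Complex.I)) ^ n).re)
      (nhdsWithin 0 (Set.Ioi 0)) (nhds 0) := by
  obtain ⟨m, rfl⟩ : ∃ m, k = m + 1 := Nat.exists_eq_add_one_of_ne_zero (by omega)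
  obtain rfl : T = trigPoly a b (m + 1) := funext hT
  obtain rfl : S = trigPoly c d l := funext hS
  have hT_ne : ∀ z ∈ {z : ℂ | 0 < z.im}, trigPoly a b (m + 1) z ≠ 0 :=
    fun z hz h0 => hz.ne' (hreal z h0)
  have hdiff : DifferentiableOn ℂ (fun z => (trigPoly c d l z / trigPoly a b (m + 1) z) ^ n)
      {z | 0 < z.im} :=
    ((trigPoly.differentiable c d l).differentiableOn.div
      (trigPoly.differentiable a b (m + 1)).differentiableOn hT_ne).pow n
  have hper : Function.Periodic (fun z => (trigPoly c d l z / trigPoly a b (m + 1) z) ^ n) (2 * π) :=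
    fun z => by simp only [trigPoly.periodic _ _ _ z]
  have hdecay := (trigPoly.tendsto_div_comap_im_atTop a b m c d (Nat.lt_succ_iff.mp hlk) hlead).pow n
  rw [zero_pow (by omega)] at hdecay
  refine tendsto_const_nhds.congr' (eventually_nhdsWithin_of_forall fun η hη => ?_)
  have h := integral_add_mul_I_eq_zero_of_periodic 0 hdiff (by exact_mod_cast hper) hdecay hη
  rw [zero_add] at h
  simp [h]

theorem stmt_4 (k l : ℕ) (hlk : l < k) (a b c d : ℕ → ℝ)
    (hlead : (a k, b k) ≠ (0, 0))
    (T S : ℂ → ℂ)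
    (hT : ∀ ζ : ℂ, T ζ = ∑ j ∈ Finset.range (k + 1),
        ((a j : ℂ) * Complex.cos (j * ζ) + (b j : ℂ) * Complex.sin (j * ζ)))
    (hS : ∀ ζ : ℂ, S ζ = ∑ j ∈ Finset.range (l + 1),
        ((c j : ℂ) * Complex.cos (j * ζ) + (d j : ℂ) * Complex.sin (j * ζ)))
    (hreal : ∀ ζ : ℂ, T ζ = 0 → ζ.im = 0)
    (hsimple : ∀ ζ : ℂ, T ζ = 0 → deriv T ζ ≠ 0)
    (n : ℕ) (hn : 1 ≤ n) :
    Tendsto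
      (fun η : ℝ =>
        (∫ φ in (0 : ℝ)..(2 * π),
            (S ((φ : ℂ) + η * Complex.I) / T ((φ : ℂ) + η * Complex.I)) ^ n).re)
      (nhdsWithin 0 (Set.Ioi 0)) (nhds 0) :=
  stmt_4_general k l hlk a b c d hlead T S hT hS hreal n hn
end

section
/- Let ξ(ω) = (a_1 ω_1, …, a_n ω_n) for ω ∈ S^{n−1} and a_i > 0, and let θ(x,ω) = |x − ξ(ω)|². Then for any x ≠ y in the closed solid ellipsoid E_a = {z : Σ z_i²/a_i² ≤ 1}, the function ω ↦ θ(x,ω) − θ(y,ω) has the form 2⟨ω, z⟩ + c with z ∈ ℝ^n, c ∈ ℝ, and |c| < 2|z|. -/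
/-!
Expanding the squares, `θ(x, ω) - θ(y, ω) = 2⟪ξ ω, y - x⟫ + ‖x‖² - ‖y‖²`, and since `ξ = D ω` for the
symmetric diagonal operator `D = diag(a)`, the linear part is `2⟪ω, z⟫` with `z = D (y - x)`.
Writing `x = D p`, `y = D q`, the ellipsoid condition says `‖p‖, ‖q‖ ≤ 1`, and
`c = ‖x‖² - ‖y‖² = ⟪D (x - y), p + q⟫ = -⟪z, p + q⟫`. Cauchy–Schwarz together with
`‖p + q‖ < 2` (strict convexity of the unit ball, as `p ≠ q`) gives `|c| < 2‖z‖`.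
-/

open scoped RealInnerProductSpace

lemma norm_add_lt_two_of_ne {F : Type*} [NormedAddCommGroup F] [NormedSpace ℝ F]
    [StrictConvexSpace ℝ F] {p q : F} (hp : ‖p‖ ≤ 1) (hq : ‖q‖ ≤ 1) (hpq : p ≠ q) :
    ‖p + q‖ < 2 := by
  have h := norm_combo_lt_of_ne hp hq hpq (a := 1 / 2) (b := 1 / 2) (by norm_num) (by norm_num)
    (by norm_num)
  rw [← smul_add, norm_smul, Real.norm_of_nonneg (by norm_num)] at h
  linarith

section InnerProductSpace

variable {E : Type*} [NormedAddCommGroup E] [InnerProductSpace ℝ E]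

lemma norm_sub_sq_sub_norm_sub_sq (x y w : E) :
    ‖x - w‖ ^ 2 - ‖y - w‖ ^ 2 = 2 * ⟪w, y - x⟫ + (‖x‖ ^ 2 - ‖y‖ ^ 2) := by
  rw [norm_sub_sq_real, norm_sub_sq_real, inner_sub_right, real_inner_comm x, real_inner_comm y]
  ring

lemma LinearMap.IsSymmetric.abs_norm_sq_sub_norm_sq_lt {T : E →ₗ[ℝ] E} (hT : T.IsSymmetric)
    (hT_inj : Function.Injective T) {p q : E} (hp : ‖p‖ ≤ 1) (hq : ‖q‖ ≤ 1) (hpq : p ≠ q) :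
    |‖T p‖ ^ 2 - ‖T q‖ ^ 2| < 2 * ‖T (T q - T p)‖ := by
  have hz : 0 < ‖T (T q - T p)‖ :=
    norm_pos_iff.mpr fun h ↦ hpq (hT_inj (sub_eq_zero.mp (hT_inj (h.trans T.map_zero.symm))).symm)
  have hc : ‖T p‖ ^ 2 - ‖T q‖ ^ 2 = -⟪T (T q - T p), p + q⟫ := by
    rw [hT, map_add, inner_sub_left, inner_add_right, inner_add_right, real_inner_self_eq_norm_sq,
      real_inner_self_eq_norm_sq, real_inner_comm (T p)]
    ring
  calc |‖T p‖ ^ 2 - ‖T q‖ ^ 2| = |⟪T (T q - T p), p + q⟫| := by rw [hc, abs_neg]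
    _ ≤ ‖T (T q - T p)‖ * ‖p + q‖ := abs_real_inner_le_norm _ _
    _ < ‖T (T q - T p)‖ * 2 := mul_lt_mul_of_pos_left (norm_add_lt_two_of_ne hp hq hpq) hz
    _ = 2 * ‖T (T q - T p)‖ := mul_comm _ _

end InnerProductSpace

section Diagonal

variable {ι : Type*} [Fintype ι] [DecidableEq ι]

lemma toEuclideanLin_diagonal_apply (a : ι → ℝ) (v : EuclideanSpace ℝ ι) (i : ι) :
    (Matrix.diagonal a).toEuclideanLin v i = a i * v i := by
  simp [Matrix.mulVec_diagonal]

lemma isSymmetric_toEuclideanLin_diagonal (a : ι → ℝ) :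
    (Matrix.diagonal a).toEuclideanLin.IsSymmetric :=
  Matrix.isSymmetric_toEuclideanLin_iff.mpr (Matrix.isHermitian_diagonal a)

lemma injective_toEuclideanLin_diagonal {a : ι → ℝ} (ha : ∀ i, a i ≠ 0) :
    Function.Injective (Matrix.diagonal a).toEuclideanLin := fun u v h ↦ by
  ext i
  simpa [toEuclideanLin_diagonal_apply, ha i] using congr($h i)

lemma exists_norm_le_one_toEuclideanLin_diagonal_eq {a : ι → ℝ} (ha : ∀ i, a i ≠ 0)
    {x : EuclideanSpace ℝ ι} (hx : ∑ i, x i ^ 2 / a i ^ 2 ≤ 1) :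
    ∃ p : EuclideanSpace ℝ ι, ‖p‖ ≤ 1 ∧ (Matrix.diagonal a).toEuclideanLin p = x := by
  refine ⟨WithLp.toLp 2 fun i ↦ x i / a i, ?_, ?_⟩
  · rw [← sq_le_one_iff₀ (norm_nonneg _), EuclideanSpace.norm_sq_eq]
    simpa [div_pow] using hx
  · ext i
    rw [toEuclideanLin_diagonal_apply]
    exact mul_div_cancel₀ _ (ha i)

end Diagonal

theorem stmt_11 (n : ℕ) (a : Fin n → ℝ) (ha : ∀ i, 0 < a i)
    (ξ : EuclideanSpace ℝ (Fin n) → EuclideanSpace ℝ (Fin n))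
    (hξ : ∀ ω, ∀ i, ξ ω i = a i * ω i)
    (θ : EuclideanSpace ℝ (Fin n) → EuclideanSpace ℝ (Fin n) → ℝ)
    (hθ : ∀ x ω, θ x ω = ‖x - ξ ω‖ ^ 2)
    (x y : EuclideanSpace ℝ (Fin n))
    (hx : ∑ i, x i ^ 2 / a i ^ 2 ≤ 1) (hy : ∑ i, y i ^ 2 / a i ^ 2 ≤ 1)
    (hxy : x ≠ y) :
    ∃ (z : EuclideanSpace ℝ (Fin n)) (c : ℝ),
      (∀ ω ∈ Metric.sphere (0 : EuclideanSpace ℝ (Fin n)) 1,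
        θ x ω - θ y ω = 2 * ⟪ω, z⟫ + c) ∧ |c| < 2 * ‖z‖ := by
  set D := (Matrix.diagonal a).toEuclideanLin
  have ha₀ : ∀ i, a i ≠ 0 := fun i ↦ (ha i).ne'
  have hD : D.IsSymmetric := isSymmetric_toEuclideanLin_diagonal a
  have hξD : ∀ ω, ξ ω = D ω := fun ω ↦ by ext i; rw [hξ, toEuclideanLin_diagonal_apply]
  obtain ⟨p, hp, rfl⟩ := exists_norm_le_one_toEuclideanLin_diagonal_eq ha₀ hx
  obtain ⟨q, hq, rfl⟩ := exists_norm_le_one_toEuclideanLin_diagonal_eq ha₀ hy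
  refine ⟨D (D q - D p), ‖D p‖ ^ 2 - ‖D q‖ ^ 2, fun ω _ ↦ ?_, ?_⟩
  · rw [hθ, hθ, hξD, norm_sub_sq_sub_norm_sub_sq, hD]
  · exact hD.abs_norm_sq_sub_norm_sq_lt (injective_toEuclideanLin_diagonal ha₀) hp hq
      (ne_of_apply_ne D hxy)
end
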